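/- Let h : 𝔻 → ℝ be a nonnegative harmonic function on the unit disk satisfying h(conj λ) = h(λ). Then for all y ∈ (-1,1): (1-y²)/(1+y²) · h(0) ≤ h(iy) ≤ (1+y²)/(1-y²) · h(0). -/

import Mathlib

open Complex Metric

/-- A real-valued function on the open unit disk is harmonic iff it is the real part of a
holomorphic function there (the disk is simply connected). -/
def IsHarmonicOnDisk (h : ℂ → ℝ) : Prop :=
  ∃ F : ℂ → ℂ, DifferentiableOn ℂ F (ball (0 : ℂ) 1) ∧
    ∀ z ∈ ball (0 : ℂ) 1, h z = (F z).re


/-! The even part `(h z + h (-z)) / 2` is the real part of an even holomorphic `Φ` with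
`Φ 0 = h 0`, and by the conjugation symmetry it agrees with `h` on the imaginary axis. Since
`Re Φ ≥ 0`, the Cayley transform `(Φ - h 0) / (Φ + h 0)` is an even map of the disk into the
closed disk vanishing at `0`, so the Schwarz lemma bounds it by `‖w‖ ^ 2`. At `w = I * y` the
resulting inequality `‖Φ w - h 0‖ ≤ y ^ 2 * ‖Φ w + h 0‖` confines `Re Φ w = h w` to the interval
`[(1 - y²) / (1 + y²) * h 0, (1 + y²) / (1 - y²) * h 0]`. -/

open Set Asymptotics Topology

theorem Function.Even.deriv_zero {𝕜 E : Type*} [NontriviallyNormedField 𝕜] [CharZero 𝕜]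
    [NormedAddCommGroup E] [NormedSpace 𝕜 E] {f : 𝕜 → E} (hf : f.Even) : deriv f 0 = 0 := by
  have h : deriv f 0 = -deriv f 0 := by simpa [funext hf] using deriv_comp_neg f 0
  have htwo : (2 : 𝕜) • deriv f 0 = 0 := by rw [two_smul]; nth_rw 2 [h]; exact add_neg_cancel _
  exact (smul_eq_zero.mp htwo).resolve_left two_ne_zero

section Schwarz

variable {E : Type*} [NormedAddCommGroup E] [NormedSpace ℂ E] {f : ℂ → E} {R₁ R₂ : ℝ} {z : ℂ}

/-- Evenness forces `deriv f 0 = 0`, so the Schwarz bound improves to second order. -/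
theorem Complex.dist_le_mul_div_sq_of_mapsTo_ball_of_even (hf : f.Even)
    (hd : DifferentiableOn ℂ f (ball 0 R₁)) (h_maps : MapsTo f (ball 0 R₁) (closedBall (f 0) R₂))
    (hz : z ∈ ball 0 R₁) : dist (f z) (f 0) ≤ R₂ * (‖z‖ / R₁) ^ 2 := by
  have hR₁ : 0 < R₁ := nonempty_ball.mp ⟨z, hz⟩
  have hderiv : HasDerivAt f 0 0 := by
    rw [← hf.deriv_zero]
    exact (hd.differentiableAt (ball_mem_nhds 0 hR₁)).hasDerivAt
  have ho : (f · - f 0) =o[𝓝 0] (fun w ↦ ‖w - 0‖ ^ 1) := by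
    simpa using (hasDerivAt_iff_isLittleO.mp hderiv).norm_right
  simpa using dist_le_mul_div_pow_of_mapsTo_ball_of_isLittleO hd h_maps ho hz

end Schwarz

theorem Complex.norm_sub_ofReal_le_norm_add_ofReal {z : ℂ} {a : ℝ} (hz : 0 ≤ z.re) (ha : 0 ≤ a) :
    ‖z - a‖ ≤ ‖z + a‖ := by
  have hsq : ‖z - a‖ ^ 2 ≤ ‖z + a‖ ^ 2 := by
    simp only [Complex.sq_norm, normSq_apply, sub_re, sub_im, add_re, add_im, ofReal_re, ofReal_im]
    nlinarith [mul_nonneg hz ha]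
  exact (pow_le_pow_iff_left₀ (norm_nonneg _) (norm_nonneg _) two_ne_zero).mp hsq

section HalfPlane

variable {Φ : ℂ → ℂ} {R a : ℝ} {w : ℂ}

theorem Complex.norm_sub_le_sq_mul_norm_add_of_even_of_pos (heven : Φ.Even)
    (hd : DifferentiableOn ℂ Φ (ball 0 R)) (hre : ∀ z ∈ ball 0 R, 0 ≤ (Φ z).re) (h0 : Φ 0 = a)
    (ha : 0 < a) (hw : w ∈ ball 0 R) : ‖Φ w - a‖ ≤ (‖w‖ / R) ^ 2 * ‖Φ w + a‖ := by
  have hne : ∀ z ∈ ball 0 R, Φ z + a ≠ 0 := fun z hz h ↦ by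
    have := congrArg re h
    simp only [add_re, ofReal_re, zero_re] at this
    linarith [hre z hz]
  set ψ : ℂ → ℂ := fun z ↦ (Φ z - a) / (Φ z + a)
  have hψ0 : ψ 0 = 0 := by simp [ψ, h0]
  have hψ_maps : MapsTo ψ (ball 0 R) (closedBall (ψ 0) 1) := fun z hz ↦ by
    rw [hψ0, mem_closedBall_zero_iff, norm_div]
    exact div_le_one_of_le₀ (norm_sub_ofReal_le_norm_add_ofReal (hre z hz) ha.le) (norm_nonneg _)
  have hψ := dist_le_mul_div_sq_of_mapsTo_ball_of_even (f := ψ) (fun z ↦ by simp only [ψ, heven.eq])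
    ((hd.sub_const _).div (hd.add_const _) hne) hψ_maps hw
  rwa [hψ0, dist_zero_right, norm_div, one_mul, div_le_iff₀ (norm_pos_iff.mpr (hne w hw))] at hψ

/-- The case `a = 0` is reached by shifting `Φ` and `a` by `ε / 2` and letting `ε → 0`. -/
theorem Complex.norm_sub_le_sq_mul_norm_add_of_even (heven : Φ.Even)
    (hd : DifferentiableOn ℂ Φ (ball 0 R)) (hre : ∀ z ∈ ball 0 R, 0 ≤ (Φ z).re) (h0 : Φ 0 = a)
    (hw : w ∈ ball 0 R) : ‖Φ w - a‖ ≤ (‖w‖ / R) ^ 2 * ‖Φ w + a‖ := by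
  have hR : 0 < R := pos_of_mem_ball hw
  have ha : 0 ≤ a := by simpa [h0] using hre 0 (mem_ball_self hR)
  have hwR : (‖w‖ / R) ^ 2 ≤ 1 := by
    rw [mem_ball_zero_iff] at hw
    exact pow_le_one₀ (by positivity) ((div_le_one hR).mpr hw.le)
  refine le_of_forall_pos_le_add fun ε hε ↦ ?_
  have hshift := norm_sub_le_sq_mul_norm_add_of_even_of_pos (Φ := fun z ↦ Φ z + (ε / 2 : ℝ))
    (a := a + ε / 2) (fun z ↦ by simp only [heven.eq]) (hd.add_const _)
    (fun z hz ↦ by simpa using add_nonneg (hre z hz) (half_pos hε).le) (by simp [h0])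
    (by positivity) hw
  have hsub : Φ w + (ε / 2 : ℝ) - (a + ε / 2 : ℝ) = Φ w - a := by push_cast; ring
  have hadd : Φ w + (ε / 2 : ℝ) + (a + ε / 2 : ℝ) = (Φ w + a) + (ε : ℂ) := by push_cast; ring
  rw [hsub, hadd] at hshift
  calc ‖Φ w - a‖ ≤ (‖w‖ / R) ^ 2 * (‖Φ w + a‖ + ε) := by
        refine hshift.trans (mul_le_mul_of_nonneg_left ?_ (by positivity))
        simpa [abs_of_pos hε] using norm_add_le (Φ w + a) (ε : ℂ)
    _ ≤ (‖w‖ / R) ^ 2 * ‖Φ w + a‖ + ε := by nlinarith [norm_nonneg (Φ w + a)]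

end HalfPlane

theorem Complex.re_mem_Icc_of_norm_sub_le_mul_norm_add {z : ℂ} {a t : ℝ} (hz : 0 ≤ z.re)
    (ha : 0 ≤ a) (ht₀ : 0 ≤ t) (ht₁ : t < 1) (h : ‖z - a‖ ≤ t * ‖z + a‖) :
    (1 - t) / (1 + t) * a ≤ z.re ∧ z.re ≤ (1 + t) / (1 - t) * a := by
  have hsq : (z.re - a) ^ 2 + z.im ^ 2 ≤ t ^ 2 * ((z.re + a) ^ 2 + z.im ^ 2) := by
    have := pow_le_pow_left₀ (norm_nonneg _) h 2
    simpa only [mul_pow, Complex.sq_norm, normSq_apply, sub_re, sub_im, add_re, add_im, ofReal_re,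
      ofReal_im, sub_zero, add_zero, ← sq] using this
  have hre : (z.re - a) ^ 2 ≤ (t * (z.re + a)) ^ 2 := by
    nlinarith [mul_nonneg (sub_nonneg.mpr (pow_le_one₀ (n := 2) ht₀ ht₁.le)) (sq_nonneg z.im)]
  have hpos : 0 ≤ t * (z.re + a) := by positivity
  constructor
  · rw [div_mul_eq_mul_div, div_le_iff₀ (by linarith)]
    nlinarith
  · rw [div_mul_eq_mul_div, le_div_iff₀ (by linarith)]
    nlinarith

theorem IsHarmonicOnDisk.exists_even {h : ℂ → ℝ} (hh : IsHarmonicOnDisk h) :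
    ∃ Φ : ℂ → ℂ, Φ.Even ∧ DifferentiableOn ℂ Φ (ball 0 1) ∧ Φ 0 = h 0 ∧
      ∀ z ∈ ball 0 1, (Φ z).re = (h z + h (-z)) / 2 := by
  obtain ⟨F, hFd, hFre⟩ := hh
  have hneg : MapsTo Neg.neg (ball (0 : ℂ) 1) (ball 0 1) := fun z hz ↦ by simpa using hz
  refine ⟨fun z ↦ (F z + F (-z)) / 2 - (F 0).im * I, fun z ↦ by simp only [neg_neg]; ring, ?_, ?_, ?_⟩
  · exact ((hFd.add (hFd.comp differentiable_neg.differentiableOn hneg)).div_const _).sub_const _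
  · apply Complex.ext <;> simp [hFre 0 (mem_ball_self one_pos)]
  · intro z hz
    simp [hFre z hz, hFre (-z) (hneg hz)]

theorem stmt_7 (h : ℂ → ℝ) (hharm : IsHarmonicOnDisk h)
    (hnonneg : ∀ z ∈ ball (0 : ℂ) 1, 0 ≤ h z)
    (hsym : ∀ z ∈ ball (0 : ℂ) 1, h ((starRingEnd ℂ) z) = h z)
    (y : ℝ) (hy1 : -1 < y) (hy2 : y < 1) :
    (1 - y ^ 2) / (1 + y ^ 2) * h 0 ≤ h (Complex.I * y) ∧
      h (Complex.I * y) ≤ (1 + y ^ 2) / (1 - y ^ 2) * h 0 := by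
  obtain ⟨Φ, heven, hd, h0, hre⟩ := hharm.exists_even
  have hneg : ∀ z ∈ ball (0 : ℂ) 1, -z ∈ ball 0 1 := fun z hz ↦ by simpa using hz
  have hw : I * y ∈ ball (0 : ℂ) 1 := by simpa [abs_lt] using ⟨hy1, hy2⟩
  have hΦw : (Φ (I * y)).re = h (I * y) := by
    have hconj : h (-(I * y)) = h (I * y) := by simpa using hsym _ hw
    rw [hre _ hw, hconj, add_self_div_two]
  have hΦ_nonneg : ∀ z ∈ ball (0 : ℂ) 1, 0 ≤ (Φ z).re := fun z hz ↦ by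
    rw [hre z hz]; linarith [hnonneg z hz, hnonneg (-z) (hneg z hz)]
  have hbound := norm_sub_le_sq_mul_norm_add_of_even heven hd hΦ_nonneg h0 hw
  rw [norm_mul, norm_I, one_mul, norm_real, Real.norm_eq_abs, div_one, sq_abs] at hbound
  rw [← hΦw]
  exact re_mem_Icc_of_norm_sub_le_mul_norm_add (hΦ_nonneg _ hw) (hnonneg 0 (mem_ball_self one_pos))
    (sq_nonneg y) (by nlinarith) hbound
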